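/- arXiv:1804.05647 — 5 statements merged into one kernel-verified Lean document; each statement's English description precedes it below -/
import Mathlib

section
/- For partitions λ, μ with at most k parts, the set {α : α is a distinct permutation of μ and α_i ≤ λ_i for all i} is non-empty if and only if μ ⊆ λ (i.e., μ_i ≤ λ_i for all i), and in that case its cardinality equals the product over i ≥ 1 of binomial(λ'_i − μ'_{i+1}, μ'_i − μ'_{i+1}), where λ' and μ' denote conjugate partitions and binomial coefficients with negative arguments are zero. -/
open Finset

/-- The conjugate partition: `conjPart l i = #{j : l j ≥ i}` (so `conjPart l i` is `l'_i`). -/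
def conjPart {k : ℕ} (l : Fin k → ℕ) (i : ℕ) : ℕ :=
  (Finset.univ.filter fun j => i ≤ l j).card

/-- The set of distinct permutations `α` of `μ` with `α i ≤ λ i` for all `i`. -/
def permsBelow {k : ℕ} (l m : Fin k → ℕ) : Set (Fin k → ℕ) :=
  {a | (∃ w : Equiv.Perm (Fin k), a = m ∘ w) ∧ ∀ i, a i ≤ l i}

/-!
A rearrangement of `μ` is determined up to permutation by its conjugate, so `α` is a
rearrangement of `μ` iff `α' = μ'`. For antitone `g` one has `i < g'_c ↔ c ≤ g i`, which turns
`μ' = α' ≤ λ'` into `μ ⊆ λ`.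

For the count, subtract one from every part: `α ↦ α - 1` maps the rearrangements of `μ` below `λ`
to those of `μ - 1` below `λ - 1`, and `α` is recovered from `α - 1 = β` and its support `S`.
The admissible supports are the sets with `supp β ⊆ S ⊆ supp λ` and `|S| = μ'_1`, so every fibre
has `binom (λ'_1 - μ'_2) (μ'_1 - μ'_2)` elements. As `(g - 1)'_c = g'_(c+1)`, induction on the
largest part of `μ` peels off the factors of the product one at a time.
-/

theorem Equiv.Perm.exists_eq_comp_of_card_fiber_eq {ι β : Type*} [Fintype ι] [DecidableEq β]
    (f g : ι → β) (h : ∀ c, #{i | f i = c} = #{i | g i = c}) :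
    ∃ w : Equiv.Perm ι, f = g ∘ w :=
  ⟨Equiv.ofFiberEquiv fun c =>
      Fintype.equivOfCardEq (by simpa only [Fintype.card_subtype] using h c),
    funext fun i => (Equiv.ofFiberEquiv_map _ i).symm⟩

theorem finprod_eq_mul_finprod_succ {M : Type*} [CommMonoid M] {f : ℕ → M}
    (hf : (Function.mulSupport f).Finite) : ∏ᶠ i, f i = f 0 * ∏ᶠ i, f (i + 1) := by
  obtain ⟨N, hN⟩ := hf.bddAbove
  have hsupp : Function.mulSupport f ⊆ ↑(range (N + 1)) := fun i hi =>
    mem_range.2 (Nat.lt_succ_of_le (hN hi))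
  have hsupp_succ : Function.mulSupport (fun i => f (i + 1)) ⊆ ↑(range N) := fun i hi =>
    mem_range.2 (Nat.succ_le_iff.1 (hN hi))
  rw [finprod_eq_prod_of_mulSupport_subset f hsupp,
    finprod_eq_prod_of_mulSupport_subset _ hsupp_succ, prod_range_succ', mul_comm]

theorem card_filter_superset_powersetCard {α : Type*} [DecidableEq α] {A T : Finset α} {n : ℕ}
    (hAT : A ⊆ T) (hA : #A ≤ n) :
    #{S ∈ powersetCard n T | A ⊆ S} = (#T - #A).choose (n - #A) := by
  rw [← card_sdiff_of_subset hAT, ← card_powersetCard]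
  refine card_nbij' (· \ A) (· ∪ A) (fun S hS => ?_) (fun S hS => ?_)
    (fun S hS => ?_) (fun S hS => ?_) <;>
    simp only [coe_filter, mem_coe, mem_powersetCard, Set.mem_ofPred_eq] at hS ⊢
  · exact ⟨sdiff_subset_sdiff hS.1.1 subset_rfl, by rw [card_sdiff_of_subset hS.2, hS.1.2]⟩
  · have hdisj : Disjoint S A := disjoint_of_subset_left hS.1 sdiff_disjoint
    refine ⟨⟨union_subset (hS.1.trans sdiff_subset) hAT, ?_⟩, subset_union_right⟩
    rw [card_union_of_disjoint hdisj, hS.2, Nat.sub_add_cancel hA]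
  · exact sdiff_union_of_subset hS.2
  · exact union_sdiff_cancel_right (disjoint_of_subset_left hS.1 sdiff_disjoint)

section conjPart

variable {k : ℕ}

theorem conjPart_zero (g : Fin k → ℕ) : conjPart g 0 = k := by
  simp [conjPart]

theorem conjPart_eq_zero {g : Fin k → ℕ} {c : ℕ} (h : ∀ i, g i < c) : conjPart g c = 0 := by
  simpa [conjPart, filter_eq_empty_iff] using h

theorem conjPart_le_conjPart {a b : Fin k → ℕ} (h : ∀ i, a i ≤ b i) (c : ℕ) :
    conjPart a c ≤ conjPart b c :=
  card_le_card <| monotone_filter_right _ fun i _ hi => hi.trans (h i)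

theorem conjPart_antitone (g : Fin k → ℕ) : Antitone (conjPart g) :=
  fun _ _ hcd => card_le_card <| monotone_filter_right _ fun _ _ hi => hcd.trans hi

theorem conjPart_sub_one (g : Fin k → ℕ) (c : ℕ) :
    conjPart (g - 1) (c + 1) = conjPart g (c + 2) := by
  simp only [conjPart, Pi.sub_apply, Pi.one_apply]
  congr 1
  ext i
  simp only [mem_filter, mem_univ, true_and]
  omega

theorem conjPart_comp_perm (g : Fin k → ℕ) (w : Equiv.Perm (Fin k)) :
    conjPart (g ∘ w) = conjPart g :=
  funext fun _ => card_equiv w (by simp)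

theorem card_filter_eq_eq_conjPart_sub (g : Fin k → ℕ) (c : ℕ) :
    #{i | g i = c} = conjPart g c - conjPart g (c + 1) := by
  have hsplit : univ.filter (fun i => c ≤ g i) =
      univ.filter (fun i => g i = c) ∪ univ.filter (fun i => c + 1 ≤ g i) := by
    ext i
    simp only [mem_filter, mem_union, mem_univ, true_and]
    omega
  have hdisj : Disjoint (univ.filter fun i => g i = c) (univ.filter fun i => c + 1 ≤ g i) :=
    disjoint_filter.2 fun _ _ h => by omega
  rw [conjPart, conjPart, hsplit, card_union_of_disjoint hdisj, Nat.add_sub_cancel]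

theorem exists_perm_iff_conjPart_eq (a g : Fin k → ℕ) :
    (∃ w : Equiv.Perm (Fin k), a = g ∘ w) ↔ conjPart a = conjPart g := by
  refine ⟨fun ⟨w, hw⟩ => hw ▸ conjPart_comp_perm g w, fun h => ?_⟩
  exact Equiv.Perm.exists_eq_comp_of_card_fiber_eq a g fun c => by
    rw [card_filter_eq_eq_conjPart_sub, card_filter_eq_eq_conjPart_sub, h]

theorem conjPart_eq_iff (a b : Fin k → ℕ) :
    conjPart a = conjPart b ↔
      conjPart a 1 = conjPart b 1 ∧ conjPart (a - 1) = conjPart (b - 1) := by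
  refine ⟨fun h => ⟨congrFun h 1, funext fun c => ?_⟩,
    fun ⟨h1, h⟩ => funext fun c => ?_⟩
  · rcases c with _ | c
    · rw [conjPart_zero, conjPart_zero]
    · rw [conjPart_sub_one, conjPart_sub_one, h]
  · rcases c with _ | _ | c
    · rw [conjPart_zero, conjPart_zero]
    · exact h1
    · rw [← conjPart_sub_one, ← conjPart_sub_one, h]

theorem lt_conjPart_iff {g : Fin k → ℕ} (hg : Antitone g) (c : ℕ) (i : Fin k) :
    (i : ℕ) < conjPart g c ↔ c ≤ g i := by
  constructor
  · intro hi
    by_contra! hlt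
    have hsub : ({j | c ≤ g j} : Finset (Fin k)) ⊆ Iio i := fun j hj => by
      simp only [mem_filter, mem_univ, true_and] at hj
      exact mem_Iio.2 (lt_of_not_ge fun hij => by have := hg hij; omega)
    have := card_le_card hsub
    rw [Fin.card_Iio] at this
    exact hi.not_ge this
  · intro hc
    have hsub : Iic i ⊆ ({j | c ≤ g j} : Finset (Fin k)) := fun j hj =>
      mem_filter.2 ⟨mem_univ j, hc.trans (hg (mem_Iic.1 hj))⟩
    have := card_le_card hsub
    rw [Fin.card_Iic] at this
    exact this

theorem le_of_conjPart_le {l m : Fin k → ℕ} (hl : Antitone l) (hm : Antitone m)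
    (h : ∀ c, conjPart m c ≤ conjPart l c) (i : Fin k) : m i ≤ l i :=
  (lt_conjPart_iff hl _ i).1 (((lt_conjPart_iff hm _ i).2 le_rfl).trans_le (h _))

end conjPart

section permsBelowFinset

variable {k : ℕ}

def permsBelowFinset (l m : Fin k → ℕ) : Finset (Fin k → ℕ) :=
  (univ.image fun w : Equiv.Perm (Fin k) => m ∘ w).filter fun a => ∀ i, a i ≤ l i

theorem coe_permsBelowFinset (l m : Fin k → ℕ) :
    ↑(permsBelowFinset l m) = permsBelow l m := by
  ext a
  simp only [permsBelowFinset, permsBelow, coe_filter, mem_image, mem_univ, true_and,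
    Set.mem_ofPred_eq, eq_comm]

theorem mem_permsBelowFinset {l m a : Fin k → ℕ} :
    a ∈ permsBelowFinset l m ↔ conjPart a = conjPart m ∧ ∀ i, a i ≤ l i := by
  rw [← mem_coe, coe_permsBelowFinset, permsBelow, Set.mem_ofPred_eq, exists_perm_iff_conjPart_eq]

theorem mem_permsBelowFinset_iff_sub_one {l m a : Fin k → ℕ} :
    a ∈ permsBelowFinset l m ↔ a - 1 ∈ permsBelowFinset (l - 1) (m - 1) ∧
      conjPart a 1 = conjPart m 1 ∧ ∀ i, 1 ≤ a i → 1 ≤ l i := by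
  simp only [mem_permsBelowFinset, conjPart_eq_iff a m, Pi.sub_apply, Pi.one_apply]
  constructor
  · rintro ⟨⟨h1, h⟩, hal⟩
    exact ⟨⟨h, fun i => Nat.sub_le_sub_right (hal i) 1⟩, h1, fun i hi => hi.trans (hal i)⟩
  · rintro ⟨⟨h, hal⟩, h1, hsupp⟩
    exact ⟨⟨h1, h⟩, fun i => by have := hal i; have := hsupp i; omega⟩

def succOn (S : Finset (Fin k)) (β : Fin k → ℕ) : Fin k → ℕ :=
  fun i => if i ∈ S then β i + 1 else 0

theorem filter_one_le_succOn (S : Finset (Fin k)) (β : Fin k → ℕ) :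
    univ.filter (fun i => 1 ≤ succOn S β i) = S := by
  ext i
  rw [mem_filter]
  by_cases hi : i ∈ S <;> simp [succOn, hi]

theorem succOn_sub_one {S : Finset (Fin k)} {β : Fin k → ℕ} (hβS : ∀ i, 1 ≤ β i → i ∈ S) :
    succOn S β - 1 = β := funext fun i => by
  by_cases hi : i ∈ S
  · simp [succOn, hi]
  · have hβi : β i = 0 := by
      by_contra h
      exact hi (hβS i (by omega))
    simp [succOn, hi, hβi]

theorem succOn_filter_one_le_sub_one (a : Fin k → ℕ) :
    succOn (univ.filter fun i => 1 ≤ a i) (a - 1) = a := funext fun i => by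
  simp only [succOn, mem_filter, mem_univ, true_and, Pi.sub_apply, Pi.one_apply]
  split_ifs <;> omega

theorem succOn_mem_permsBelowFinset {l m β : Fin k → ℕ} {S : Finset (Fin k)}
    (hβ : β ∈ permsBelowFinset (l - 1) (m - 1)) (hβS : ∀ i, 1 ≤ β i → i ∈ S)
    (hSl : ∀ i ∈ S, 1 ≤ l i) (hS : #S = conjPart m 1) :
    succOn S β ∈ permsBelowFinset l m := by
  refine mem_permsBelowFinset_iff_sub_one.2
    ⟨by rwa [succOn_sub_one hβS], ?_, fun i hi => hSl i ?_⟩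
  · exact (congrArg card (filter_one_le_succOn S β)).trans hS
  · rw [← filter_one_le_succOn S β]
    exact mem_filter.2 ⟨mem_univ i, hi⟩

theorem card_fiber_sub_one {l m β : Fin k → ℕ}
    (hβ : β ∈ permsBelowFinset (l - 1) (m - 1)) :
    #{a ∈ permsBelowFinset l m | a - 1 = β} =
      (conjPart l 1 - conjPart m 2).choose (conjPart m 1 - conjPart m 2) := by
  obtain ⟨hβm, hβl⟩ := mem_permsBelowFinset.1 hβ
  set A := univ.filter fun i => 1 ≤ β i
  set T := univ.filter fun i => 1 ≤ l i
  have hA : #A = conjPart m 2 := by rw [← conjPart_sub_one, ← hβm]; rfl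
  have hAT : A ⊆ T := monotone_filter_right _ fun i _ hi => by
    have := hβl i
    simp only [Pi.sub_apply, Pi.one_apply] at this
    omega
  have hcount := card_filter_superset_powersetCard (n := conjPart m 1) hAT
    (hA ▸ conjPart_antitone m one_le_two)
  rw [hA] at hcount
  refine Eq.trans ?_ hcount
  refine card_nbij' (fun a => univ.filter fun i => 1 ≤ a i) (fun S => succOn S β)
    (fun a ha => ?_) (fun S hS => ?_) (fun a ha => ?_) (fun S _ => filter_one_le_succOn S β)
  · simp only [coe_filter, mem_powersetCard, Set.mem_ofPred_eq] at ha ⊢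
    obtain ⟨ha, rfl⟩ := ha
    obtain ⟨-, ha1, hal⟩ := mem_permsBelowFinset_iff_sub_one.1 ha
    refine ⟨⟨monotone_filter_right _ fun i _ => hal i, ha1⟩,
      monotone_filter_right _ fun i _ hi => ?_⟩
    simp only [Pi.sub_apply, Pi.one_apply] at hi
    omega
  · simp only [coe_filter, mem_powersetCard, Set.mem_ofPred_eq] at hS ⊢
    obtain ⟨⟨hST, hScard⟩, hAS⟩ := hS
    have hβS : ∀ i, 1 ≤ β i → i ∈ S := fun i hi => hAS (mem_filter.2 ⟨mem_univ i, hi⟩)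
    refine ⟨succOn_mem_permsBelowFinset hβ hβS (fun i hi => ?_) hScard, succOn_sub_one hβS⟩
    simpa [T] using hST hi
  · simp only [coe_filter, Set.mem_ofPred_eq] at ha
    obtain ⟨-, rfl⟩ := ha
    exact succOn_filter_one_le_sub_one a

theorem card_permsBelowFinset_eq_choose_mul (l m : Fin k → ℕ) :
    #(permsBelowFinset l m) = (conjPart l 1 - conjPart m 2).choose (conjPart m 1 - conjPart m 2) *
      #(permsBelowFinset (l - 1) (m - 1)) := by
  rw [card_eq_sum_card_fiberwise fun _ ha => (mem_permsBelowFinset_iff_sub_one.1 ha).1,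
    sum_congr rfl fun _ => card_fiber_sub_one, sum_const, smul_eq_mul, mul_comm]

theorem card_permsBelowFinset (l m : Fin k → ℕ) :
    #(permsBelowFinset l m) = ∏ᶠ i : ℕ, Nat.choose (conjPart l (i + 1) - conjPart m (i + 2))
      (conjPart m (i + 1) - conjPart m (i + 2)) := by
  obtain ⟨n, hn⟩ : ∃ n, ∀ i, m i ≤ n := ⟨univ.sup m, fun i => le_sup (mem_univ i)⟩
  induction n generalizing l m with
  | zero =>
    have hm : m = 0 := funext fun i => Nat.le_zero.1 (hn i)
    subst hm
    have hzero : ∀ i, conjPart (0 : Fin k → ℕ) (i + 1) = 0 :=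
      fun i => conjPart_eq_zero fun _ => Nat.succ_pos i
    simp [permsBelowFinset, image_const univ_nonempty, filter_singleton, hzero]
  | succ n ih =>
    have hsupp : (Function.mulSupport fun i : ℕ =>
        (conjPart l (i + 1) - conjPart m (i + 2)).choose
          (conjPart m (i + 1) - conjPart m (i + 2))).Finite := by
      refine (Set.finite_Iio (n + 1)).subset fun i hi => Set.mem_Iio.2 ?_
      by_contra! hni
      have hvanish : ∀ c, i < c → conjPart m c = 0 :=
        fun c hc => conjPart_eq_zero fun j => (hn j).trans_lt (by omega)
      simp [hvanish (i + 1) (by omega), hvanish (i + 2) (by omega)] at hi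
    have hn' : ∀ i, (m - 1) i ≤ n := fun i => by
      simp only [Pi.sub_apply, Pi.one_apply]
      have := hn i
      omega
    rw [card_permsBelowFinset_eq_choose_mul, ih (l - 1) (m - 1) hn',
      finprod_eq_mul_finprod_succ hsupp]
    simp only [conjPart_sub_one]

end permsBelowFinset

/-- the set of distinct permutations of `μ` dominated by `λ` is non-empty iff
`μ ⊆ λ`, and in that case its cardinality is
`∏_{i ≥ 1} binom (λ'_i − μ'_{i+1}) (μ'_i − μ'_{i+1})`. -/
theorem stmt0 {k : ℕ} (l m : Fin k → ℕ) (hl : Antitone l) (hm : Antitone m) :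
    ((permsBelow l m).Nonempty ↔ ∀ i, m i ≤ l i) ∧
    ((∀ i, m i ≤ l i) →
      (permsBelow l m).ncard =
        ∏ᶠ i : ℕ, Nat.choose (conjPart l (i + 1) - conjPart m (i + 2))
          (conjPart m (i + 1) - conjPart m (i + 2))) := by
  refine ⟨⟨fun ⟨a, ham, hal⟩ => ?_, fun h => ⟨m, ⟨1, rfl⟩, h⟩⟩, fun _ => ?_⟩
  · rw [exists_perm_iff_conjPart_eq] at ham
    exact le_of_conjPart_le hl hm (ham ▸ conjPart_le_conjPart hal)
  · rw [← coe_permsBelowFinset, Set.ncard_coe_finset, card_permsBelowFinset]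
end

section
/- The skew group ring H_k = R[x_1^{±1},…,x_k^{±1}] ⋊ R[S_k] over R = ℂ[z, z^{-1}], with relations σ_i x_i σ_i = x_{i+1} and x_i σ_j = σ_j x_i for j ≠ i, i−1, has centre Z(H_k) equal to the ring of symmetric Laurent polynomials R[x_1^{±1},…,x_k^{±1}]^{S_k}. -/
/-!
Commuting with a Laurent polynomial `a` placed at the identity gives `f w * (w • a - a) = 0`
for every `w`. Since `A` is a domain and `S_k` acts faithfully on the variables, this forces
`f w = 0` for `w ≠ 1`. Commuting with a bare permutation `u` then gives `u • f 1 = f 1`.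
Conversely, a symmetric Laurent polynomial commutes with every `A`-coefficient and every
permutation.
-/

open Finset

noncomputable section

/-- The ring `A = R[x_1^{±1},…,x_k^{±1}]` of Laurent polynomials over `R = ℂ[z,z^{-1}]`. -/
abbrev LaurentK (k : ℕ) : Type :=
  AddMonoidAlgebra (LaurentPolynomial ℂ) (Fin k → ℤ)

/-- The additive equivalence of exponent lattices induced by a permutation
(sending the monomial `x^m` to `x^{m ∘ w⁻¹}`, i.e. `x_i ↦ x_{w(i)}`). -/
def shuffle {k : ℕ} (w : Equiv.Perm (Fin k)) : (Fin k → ℤ) ≃+ (Fin k → ℤ) where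
  toFun m := m ∘ w.symm
  invFun m := m ∘ w
  left_inv m := by ext i; simp
  right_inv m := by ext i; simp
  map_add' _ _ := rfl

/-- The action of `S_k` on `A` permuting the variables: `w • x_i = x_{w(i)}`. -/
def permAct {k : ℕ} (w : Equiv.Perm (Fin k)) : LaurentK k ≃ₐ[ℂ] LaurentK k :=
  AddMonoidAlgebra.domCongr ℂ (LaurentPolynomial ℂ) (shuffle w)

/-- The skew group ring `H_k = A ⋊ R[S_k]` (with relations `σ_i x_i σ_i = x_{i+1}`,
`x_i σ_j = σ_j x_i` for `j ≠ i, i−1`), realized as `A`-valued functions on `S_k`;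
`f : H k` represents the element `Σ_w f(w)·w`. -/
def Hk (k : ℕ) : Type := Equiv.Perm (Fin k) → LaurentK k

/-- Multiplication in the skew group ring:
`(Σ_u f(u)·u)(Σ_v g(v)·v) = Σ_{u,v} f(u)·(u • g(v))·uv`. -/
def hmul {k : ℕ} (f g : Hk k) : Hk k :=
  fun w => ∑ u : Equiv.Perm (Fin k), f u * permAct u (g (u⁻¹ * w))

namespace Hk

variable {k : ℕ}

lemma permAct_one (a : LaurentK k) : permAct 1 a = a := by
  have h : shuffle (1 : Equiv.Perm (Fin k)) = AddEquiv.refl _ := AddEquiv.ext fun _ => rfl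
  rw [permAct, h, AddMonoidAlgebra.domCongr_refl]
  rfl

lemma permAct_single (w : Equiv.Perm (Fin k)) (m : Fin k → ℤ) (r : LaurentPolynomial ℂ) :
    permAct w (AddMonoidAlgebra.single m r) = AddMonoidAlgebra.single (m ∘ w.symm) r :=
  AddMonoidAlgebra.domCongr_single (R := ℂ) (A := LaurentPolynomial ℂ) (shuffle w) m r

lemma eq_one_of_forall_permAct_eq {w : Equiv.Perm (Fin k)} (hw : ∀ a, permAct w a = a) :
    w = 1 := by
  refine Equiv.ext fun i => by_contra fun hi => ?_
  have hx := hw (AddMonoidAlgebra.single (Pi.single i 1) 1)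
  rw [permAct_single, AddMonoidAlgebra.single_left_inj one_ne_zero] at hx
  exact hi (by simpa [Pi.single_apply] using congrFun hx (w i))

/-- The element `a · u` of the skew group ring. -/
def single (u : Equiv.Perm (Fin k)) (a : LaurentK k) : Hk k :=
  fun v => if v = u then a else 0

lemma hmul_single_left (u : Equiv.Perm (Fin k)) (a : LaurentK k) (g : Hk k)
    (w : Equiv.Perm (Fin k)) :
    hmul (single u a) g w = a * permAct u (g (u⁻¹ * w)) := by
  rw [hmul, Finset.sum_eq_single u (fun v _ hv => by simp [single, hv]) (by simp)]
  simp [single]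

lemma hmul_single_right (f : Hk k) (v : Equiv.Perm (Fin k)) (a : LaurentK k)
    (w : Equiv.Perm (Fin k)) :
    hmul f (single v a) w = f (w * v⁻¹) * permAct (w * v⁻¹) a := by
  rw [hmul, Finset.sum_eq_single (w * v⁻¹) (fun u _ hu => ?_) (by simp)]
  · simp [single]
  · have : u⁻¹ * w ≠ v := fun h => hu (by rw [← h]; group)
    simp [single, this]

lemma single_one_comm {a : LaurentK k} (ha : ∀ u, permAct u a = a) (g : Hk k) :
    hmul (single 1 a) g = hmul g (single 1 a) := by
  funext w
  rw [hmul_single_left, hmul_single_right, inv_one, one_mul, mul_one, permAct_one, ha, mul_comm]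

lemma eq_single_one_of_apply_eq_zero {f : Hk k} (hf : ∀ w, w ≠ 1 → f w = 0) :
    f = single 1 (f 1) := by
  funext w
  by_cases hw : w = 1
  · simp [single, hw]
  · simp [single, hw, hf w hw]

section Central

variable {f : Hk k} (hf : ∀ g : Hk k, hmul f g = hmul g f)
include hf

lemma apply_mul_permAct_of_central (w : Equiv.Perm (Fin k)) (a : LaurentK k) :
    f w * permAct w a = a * f w := by
  have h := congrFun (hf (single 1 a)) w
  rwa [hmul_single_right, hmul_single_left, inv_one, mul_one, one_mul, permAct_one] at h

lemma apply_eq_zero_of_central {w : Equiv.Perm (Fin k)} (hw : w ≠ 1) : f w = 0 := by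
  by_contra h
  refine hw (eq_one_of_forall_permAct_eq fun a => mul_left_cancel₀ h ?_)
  rw [apply_mul_permAct_of_central hf, mul_comm]

lemma permAct_apply_one_of_central (u : Equiv.Perm (Fin k)) : permAct u (f 1) = f 1 := by
  have h := congrFun (hf (single u 1)) u
  rw [hmul_single_right, hmul_single_left, mul_inv_cancel, inv_mul_cancel, map_one,
    mul_one, one_mul] at h
  exact h.symm

end Central

end Hk

open Hk in
/-- the centre of the skew group ring `H_k` is exactly the set of symmetric
Laurent polynomials `R[x_1^{±1},…,x_k^{±1}]^{S_k}` (supported on the identity permutation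
and invariant under the `S_k`-action on the variables). -/
theorem stmt3 {k : ℕ} (f : Hk k) :
    (∀ g : Hk k, hmul f g = hmul g f) ↔
      ((∀ w : Equiv.Perm (Fin k), w ≠ 1 → f w = 0) ∧
        ∀ u : Equiv.Perm (Fin k), permAct u (f 1) = f 1) := by
  refine ⟨fun hf => ⟨fun w => apply_eq_zero_of_central hf, permAct_apply_one_of_central hf⟩, ?_⟩
  rintro ⟨hsupp, hinv⟩
  rw [eq_single_one_of_apply_eq_zero hsupp]
  exact single_one_comm hinv

end
end

section
/- If the power sums of x_1,…,x_k satisfy p_{n+r} = z·p_r for all r ≥ 1 and p_n = z·k, then the formal generating series P(u) = Σ_{i≥1} p_i u^{i-1} satisfies (u^n − z)·P(u^{-1})·u = Σ_{i=1}^n p_i u^{n+1−i}·u, i.e., (u^n − z) Σ_{i=1}^k u x_i/(u − x_i) = Σ_{i=1}^n p_i u^{n+1−i}, which is a polynomial in u of degree at most n; consequently x_i^n = z for each i. -/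
open Polynomial Finset

lemma tele {R : Type*} [CommRing R] (n : ℕ) (c : R) :
    (∑ r ∈ Finset.Icc 1 n, Polynomial.C c ^ r * X ^ (n + 1 - r)) * (X - Polynomial.C c)
      = (X ^ n - Polynomial.C (c ^ n)) * (Polynomial.C c * X) := by
  have h1 : (∑ r ∈ Finset.Icc 1 n, Polynomial.C c ^ r * X ^ (n + 1 - r))
      = (∑ i ∈ Finset.range n, X ^ i * Polynomial.C c ^ (n - 1 - i)) * (Polynomial.C c * X) := by
    rw [Finset.sum_mul, ← Finset.sum_range_reflect (fun i => X ^ i * Polynomial.C c ^ (n - 1 - i) * (Polynomial.C c * X)) n]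
    rw [show Finset.Icc 1 n = Finset.Ico 1 (n+1) by rfl, Finset.sum_Ico_eq_sum_range]
    apply Finset.sum_congr (by simp)
    intro i hi
    simp only [Finset.mem_range] at hi
    have e1 : n - 1 - (n - 1 - i) = i := by omega
    have e2 : n + 1 - (1 + i) = (n - 1 - i) + 1 := by omega
    rw [e1, e2, pow_succ, pow_add, pow_one]
    ring
  rw [h1, mul_right_comm, geom_sum₂_mul, map_pow]

/-- if the power sums of `x_1,…,x_k` in an integral domain containing `ℂ`
satisfy `p_{n+r} = z·p_r` for all `r ≥ 1` and `p_n = z·k`, then the (denominator-cleared)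
generating-series identity
`(u^n − z) · Σ_i u·x_i·∏_{j≠i}(u − x_j) = (Σ_{r=1}^n p_r u^{n+1−r}) · ∏_j (u − x_j)`
holds in `D[u]`, and consequently `x_i^n = z` for each `i`. -/
theorem stmt8 {D : Type*} [CommRing D] [IsDomain D] [Algebra ℂ D]
    (n k : ℕ) (hn : 0 < n) (x : Fin k → D) (z : D)
    (hrec : ∀ r : ℕ, 1 ≤ r → ∑ i, x i ^ (n + r) = z * ∑ i, x i ^ r)
    (hbase : ∑ i, x i ^ n = z * (k : D)) :
    ((X ^ n - Polynomial.C z) *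
        ∑ i : Fin k, Polynomial.C (x i) * X *
          ∏ j ∈ Finset.univ.erase i, (X - Polynomial.C (x j))
      = (∑ r ∈ Finset.Icc 1 n, Polynomial.C (∑ i, x i ^ r) * X ^ (n + 1 - r)) *
          ∏ j : Fin k, (X - Polynomial.C (x j))) ∧
    ∀ i, x i ^ n = z := by
  classical
  have hcz : CharZero D := charZero_of_injective_algebraMap (algebraMap ℂ D).injective
  have hall : ∀ m : ℕ, ∑ i, (x i ^ n - z) * x i ^ m = 0 := by
    intro m
    rcases Nat.eq_zero_or_pos m with hm | hm
    · subst hm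
      simp only [pow_zero, mul_one, Finset.sum_sub_distrib, hbase, Finset.sum_const,
        Finset.card_univ, Fintype.card_fin, nsmul_eq_mul]
      ring
    · have h := hrec m hm
      simp only [sub_mul, Finset.sum_sub_distrib, ← pow_add, h, ← Finset.mul_sum, sub_self]
  have hpoly : ∀ f : D[X], ∑ i, (x i ^ n - z) * f.eval (x i) = 0 := by
    intro f
    calc ∑ i, (x i ^ n - z) * f.eval (x i)
        = ∑ i, ∑ m ∈ Finset.range (f.natDegree + 1),
            f.coeff m * ((x i ^ n - z) * x i ^ m) := by
          refine Finset.sum_congr rfl fun i _ => ?_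
          rw [Polynomial.eval_eq_sum_range, Finset.mul_sum]
          exact Finset.sum_congr rfl fun m _ => by ring
      _ = ∑ m ∈ Finset.range (f.natDegree + 1),
            f.coeff m * ∑ i, (x i ^ n - z) * x i ^ m := by
          rw [Finset.sum_comm]
          exact Finset.sum_congr rfl fun m _ => by rw [Finset.mul_sum]
      _ = 0 := by simp [hall]
  have key : ∀ i, x i ^ n = z := by
    intro i0
    set c := x i0 with hc
    set s := (Finset.univ.image x).erase c with hs
    set f : D[X] := ∏ d ∈ s, (X - Polynomial.C d) with hf
    have hfc : f.eval c ≠ 0 := by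
      rw [hf, Polynomial.eval_prod]
      refine Finset.prod_ne_zero_iff.2 fun d hd => ?_
      have hdc : d ≠ c := Finset.ne_of_mem_erase hd
      simp only [Polynomial.eval_sub, Polynomial.eval_X, Polynomial.eval_C]
      exact sub_ne_zero.2 (Ne.symm hdc)
    have hother : ∀ i, x i ≠ c → f.eval (x i) = 0 := by
      intro i hi
      rw [hf, Polynomial.eval_prod]
      refine Finset.prod_eq_zero
        (Finset.mem_erase.2 ⟨hi, Finset.mem_image_of_mem x (Finset.mem_univ i)⟩) ?_
      simp
    have h0 := hpoly f
    rw [← Finset.sum_filter_add_sum_filter_not Finset.univ (fun i => x i = c)] at h0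
    have h2 : ∑ i ∈ Finset.univ.filter (fun i => ¬ x i = c),
        (x i ^ n - z) * f.eval (x i) = 0 :=
      Finset.sum_eq_zero fun i hi => by
        rw [hother i (Finset.mem_filter.1 hi).2, mul_zero]
    have h1 : ∑ i ∈ Finset.univ.filter (fun i => x i = c),
        (x i ^ n - z) * f.eval (x i)
        = ((Finset.univ.filter (fun i => x i = c)).card : D) * ((c ^ n - z) * f.eval c) := by
      rw [Finset.sum_congr rfl fun i hi => by rw [(Finset.mem_filter.1 hi).2],
        Finset.sum_const, nsmul_eq_mul]
    rw [h1, h2, add_zero] at h0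
    have hmem : i0 ∈ Finset.univ.filter (fun i => x i = c) := by simp [hc]
    have hcard : ((Finset.univ.filter (fun i => x i = c)).card : D) ≠ 0 := by
      have hpos : 0 < (Finset.univ.filter (fun i => x i = c)).card :=
        Finset.card_pos.2 ⟨i0, hmem⟩
      exact_mod_cast Nat.cast_ne_zero.2 hpos.ne'
    rcases mul_eq_zero.1 h0 with h | h
    · exact absurd h hcard
    rcases mul_eq_zero.1 h with h | h
    · exact sub_eq_zero.1 h
    · exact absurd h hfc
  refine ⟨?_, key⟩
  have hr : (∑ r ∈ Finset.Icc 1 n, Polynomial.C (∑ i, x i ^ r) * X ^ (n + 1 - r))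
      = ∑ i : Fin k, ∑ r ∈ Finset.Icc 1 n, Polynomial.C (x i) ^ r * X ^ (n + 1 - r) := by
    rw [Finset.sum_comm]
    refine Finset.sum_congr rfl fun r _ => ?_
    rw [map_sum, Finset.sum_mul]
    exact Finset.sum_congr rfl fun i _ => by rw [map_pow]
  rw [hr, Finset.mul_sum, Finset.sum_mul]
  refine Finset.sum_congr rfl fun i _ => ?_
  rw [← Finset.mul_prod_erase Finset.univ _ (Finset.mem_univ i), ← key i]
  linear_combination -(∏ j ∈ Finset.univ.erase i, (X - Polynomial.C (x j))) * tele n (x i)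
end

section
/- In Λ_k = ℂ[x_1,…,x_k]^{S_k}, for partitions λ, μ with at most k parts, the product m_μ · h_r = Σ_λ θ_{λ/μ} m_λ, where the sum runs over partitions λ ⊇ μ with |λ| − |μ| = r and ℓ(λ) ≤ k, and θ_{λ/μ} equals the cardinality of {w ∈ S^μ : μ_{w(i)} ≤ λ_i for all i ∈ [k]}, with S^μ the set of minimal-length right coset representatives of S_μ\S_k. -/
open Finset MvPolynomial

/-- The monomial symmetric polynomial `m_μ = Σ_{α ∼ μ} x^α` in `k` variables. -/
noncomputable def msym {k : ℕ} (μ : Fin k → ℕ) : MvPolynomial (Fin k) ℂ :=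
  ∑ a ∈ Finset.image (fun w : Equiv.Perm (Fin k) => μ ∘ w) Finset.univ,
    monomial (Finsupp.equivFunOnFinite.symm a) 1

/-- The complete homogeneous symmetric polynomial `h_r` in `k` variables. -/
noncomputable def hsym (k r : ℕ) : MvPolynomial (Fin k) ℂ :=
  ∑ a ∈ (Finset.univ : Finset (Fin k → Fin (r + 1))).filter
      (fun a => ∑ i, ((a i : ℕ)) = r),
    monomial (Finsupp.equivFunOnFinite.symm fun i => ((a i : ℕ))) 1

/-- `θ_{λ/μ}`: the number of distinct permutations `α` of `μ` with `α ≤ λ` componentwise;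
these index the minimal-length coset representatives `w ∈ S^μ` with `μ ∘ w ≤ λ`. -/
noncomputable def theta {k : ℕ} (l μ : Fin k → ℕ) : ℕ :=
  Set.ncard {a : Fin k → ℕ | (∃ w : Equiv.Perm (Fin k), a = μ ∘ w) ∧ ∀ i, a i ≤ l i}


-- theta as a Finset card
lemma theta_eq_card {k : ℕ} (l μ : Fin k → ℕ) :
    theta l μ = ((Finset.image (fun w : Equiv.Perm (Fin k) => μ ∘ w) Finset.univ).filter
      (fun a => ∀ i, a i ≤ l i)).card := by
  rw [theta, ← Set.ncard_coe_finset]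
  congr 1
  ext a
  simp [Finset.mem_filter, Finset.mem_image, eq_comm]

lemma theta_comp_perm {k : ℕ} (l μ : Fin k → ℕ) (w : Equiv.Perm (Fin k)) :
    theta (l ∘ w) μ = theta l μ := by
  rw [theta_eq_card, theta_eq_card]
  apply Finset.card_bij (fun a _ => a ∘ w.symm)
  · rintro a ha
    simp only [Finset.mem_filter, Finset.mem_image, Finset.mem_univ, true_and] at ha ⊢
    obtain ⟨⟨v, hv⟩, hle⟩ := ha
    refine ⟨⟨w.symm.trans v, ?_⟩, fun i => ?_⟩
    · ext i; simp [← hv]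
    · simpa using hle (w.symm i)
  · intro a _ b _ h
    funext i
    have := congrFun h (w i)
    simpa using this
  · intro b hb
    simp only [Finset.mem_filter, Finset.mem_image, Finset.mem_univ, true_and] at hb ⊢
    obtain ⟨⟨v, hv⟩, hle⟩ := hb
    refine ⟨b ∘ w, ⟨⟨w.trans v, ?_⟩, fun i => hle (w i)⟩, ?_⟩
    · ext i; simp [← hv]
    · funext i; simp

lemma antitone_le_of_comp {k : ℕ} {μ l : Fin k → ℕ} (hμ : Antitone μ) (hl : Antitone l)
    (w : Equiv.Perm (Fin k)) (h : ∀ i, μ (w i) ≤ l i) : ∀ i, μ i ≤ l i := by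
  intro i
  have : ∃ j, i ≤ j ∧ w j ≤ i := by
    by_contra hc
    push_neg at hc
    have hsub : (Finset.Ici i).image w ⊆ Finset.Ioi i := by
      intro x hx
      simp only [Finset.mem_image, Finset.mem_Ici] at hx
      obtain ⟨j, hj, rfl⟩ := hx
      exact Finset.mem_Ioi.mpr (hc j hj)
    have h1 : (Finset.Ici i).card ≤ (Finset.Ioi i).card :=
      le_trans (le_of_eq (Finset.card_image_of_injective _ w.injective).symm)
        (Finset.card_le_card hsub)
    rw [Fin.card_Ici, Fin.card_Ioi] at h1
    omega
  obtain ⟨j, hij, hwj⟩ := this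
  exact le_trans (hμ hwj) (le_trans (h j) (hl hij))

/-- the antitone rearrangement of a tuple -/
noncomputable def sortA {k : ℕ} {α : Type*} [LinearOrder α] (f : Fin k → α) : Fin k → α :=
  f ∘ (Fin.revPerm.trans (Tuple.sort f))

lemma sortA_antitone {k : ℕ} {α : Type*} [LinearOrder α] (f : Fin k → α) :
    Antitone (sortA f) := by
  intro i j hij
  have := Tuple.monotone_sort f
  exact this (Fin.rev_le_rev.mpr hij)

lemma sortA_eq_comp_perm {k : ℕ} {α : Type*} [LinearOrder α] (f : Fin k → α) :
    ∃ w : Equiv.Perm (Fin k), sortA f = f ∘ w :=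
  ⟨Fin.revPerm.trans (Tuple.sort f), rfl⟩

lemma sortA_unique {k : ℕ} {α : Type*} [LinearOrder α] {f l : Fin k → α}
    (hl : Antitone l) (v : Equiv.Perm (Fin k)) (hf : f = l ∘ v) : sortA f = l := by
  have hmono : Monotone (f ∘ (Fin.revPerm.trans v.symm)) := by
    have : f ∘ (Fin.revPerm.trans v.symm) = l ∘ Fin.rev := by
      funext i; simp [hf]
    rw [this]
    intro i j hij
    exact hl (Fin.rev_le_rev.mpr hij)
  have key := Tuple.comp_sort_eq_comp_iff_monotone.mpr hmono
  have hlr : l ∘ Fin.rev = f ∘ Tuple.sort f := by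
    rw [← key]; funext i; simp [hf]
  funext i
  have := congrFun hlr (Fin.rev i)
  simp only [Function.comp_apply, Fin.rev_rev] at this
  rw [sortA]
  simp only [Function.comp_apply, Equiv.trans_apply, Fin.revPerm_apply]
  exact this.symm

lemma sortA_eq_self {k : ℕ} {α : Type*} [LinearOrder α] {l : Fin k → α}
    (hl : Antitone l) : sortA l = l :=
  sortA_unique hl (Equiv.refl _) rfl

lemma M_mul {k : ℕ} (a b : Fin k → ℕ) :
    (monomial (Finsupp.equivFunOnFinite.symm a) (1:ℂ)) *
      monomial (Finsupp.equivFunOnFinite.symm b) 1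
    = monomial (Finsupp.equivFunOnFinite.symm (fun i => a i + b i)) 1 := by
  rw [monomial_mul, one_mul]
  have : Finsupp.equivFunOnFinite.symm a + Finsupp.equivFunOnFinite.symm b
      = Finsupp.equivFunOnFinite.symm (fun i => a i + b i) := by
    ext i; simp
  rw [this]

lemma lhs_eq {k : ℕ} (μ : Fin k → ℕ) (r : ℕ) :
    msym μ * hsym k r =
      ∑ f ∈ (Finset.univ : Finset (Fin k → Fin ((∑ i, μ i) + r + 1))).filter
          (fun f => ∑ i, ((f i : ℕ)) = (∑ i, μ i) + r),
        theta (fun i => ((f i : ℕ))) μ •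
          monomial (Finsupp.equivFunOnFinite.symm (fun i => ((f i : ℕ)))) (1:ℂ) := by
  classical
  set s := (∑ i, μ i) + r with hs
  set A : Finset (Fin k → ℕ) := Finset.image (fun w : Equiv.Perm (Fin k) => μ ∘ w) Finset.univ
    with hA
  set C : Finset (Fin k → Fin (s+1)) :=
    Finset.univ.filter (fun f => ∑ i, ((f i : ℕ)) = s) with hC
  have hsumA : ∀ a ∈ A, ∑ i, a i = ∑ i, μ i := by
    intro a ha
    rw [hA, Finset.mem_image] at ha
    obtain ⟨w, _, rfl⟩ := ha
    exact Equiv.sum_comp w μ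
  rw [msym, hsym, Finset.sum_mul_sum]
  have step1 : ∀ a ∈ A,
      (∑ b ∈ (Finset.univ : Finset (Fin k → Fin (r+1))).filter
          (fun b => ∑ i, ((b i : ℕ)) = r),
        monomial (Finsupp.equivFunOnFinite.symm (fun i => a i + (b i : ℕ))) (1:ℂ))
      = ∑ f ∈ C.filter (fun f => ∀ i, a i ≤ (f i : ℕ)),
          monomial (Finsupp.equivFunOnFinite.symm (fun i => ((f i : ℕ)))) (1:ℂ) := by
    intro a ha
    have hale : ∀ i, a i ≤ ∑ j, μ j := by
      intro i
      rw [← hsumA a ha]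
      exact Finset.single_le_sum (f := a) (fun j _ => Nat.zero_le _) (Finset.mem_univ i)
    have hbd1 : ∀ (b : Fin k → Fin (r+1)) (i : Fin k), a i + (b i : ℕ) < s + 1 := by
      intro b i
      have h1 := hale i
      have h2 : (b i : ℕ) ≤ r := Fin.is_le _
      omega
    refine Finset.sum_bij'
      (fun b _ => fun i => (⟨a i + (b i : ℕ), hbd1 b i⟩ : Fin (s+1)))
      (fun f _ => fun i => (⟨min ((f i : ℕ) - a i) r, by omega⟩ : Fin (r+1)))
      ?_ ?_ ?_ ?_ ?_
    · -- maps into the filter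
      intro b hb
      simp only [Finset.mem_filter, Finset.mem_univ, true_and, hC] at hb ⊢
      constructor
      · rw [Finset.sum_add_distrib, hsumA a ha, hb]
      · intro i; exact Nat.le_add_right _ _
    · -- reverse maps into filter
      intro f hf
      simp only [Finset.mem_filter, Finset.mem_univ, true_and, hC] at hf ⊢
      obtain ⟨hsum, hle⟩ := hf
      have hdiff : ∑ i, ((f i : ℕ) - a i) = r := by
        have : ∑ i, (a i + ((f i : ℕ) - a i)) = ∑ i, (f i : ℕ) := by
          apply Finset.sum_congr rfl
          intro i _
          exact Nat.add_sub_cancel' (hle i)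
        rw [Finset.sum_add_distrib, hsumA a ha, hsum] at this
        omega
      have hdle : ∀ i, (f i : ℕ) - a i ≤ r := by
        intro i
        rw [← hdiff]
        exact Finset.single_le_sum (f := fun j => (f j : ℕ) - a j) (fun j _ => Nat.zero_le _) (Finset.mem_univ i)
      calc ∑ i, ((⟨min ((f i : ℕ) - a i) r, by omega⟩ : Fin (r+1)) : ℕ)
          = ∑ i, ((f i : ℕ) - a i) := by
            apply Finset.sum_congr rfl
            intro i _
            simp [Nat.min_eq_left (hdle i)]
        _ = r := hdiff
    · -- left inverse
      intro b hb
      funext i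
      apply Fin.ext
      have : (b i : ℕ) ≤ r := Fin.is_le _
      simp only []
      omega
    · -- right inverse
      intro f hf
      simp only [Finset.mem_filter, Finset.mem_univ, true_and, hC] at hf
      obtain ⟨hsum, hle⟩ := hf
      have hdle : ∀ i, (f i : ℕ) - a i ≤ r := by
        intro i
        have hdiff : ∑ i, ((f i : ℕ) - a i) = r := by
          have : ∑ i, (a i + ((f i : ℕ) - a i)) = ∑ i, (f i : ℕ) := by
            apply Finset.sum_congr rfl
            intro i _
            exact Nat.add_sub_cancel' (hle i)
          rw [Finset.sum_add_distrib, hsumA a ha, hsum] at this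
          omega
        rw [← hdiff]
        exact Finset.single_le_sum (f := fun j => (f j : ℕ) - a j) (fun j _ => Nat.zero_le _) (Finset.mem_univ i)
      funext i
      apply Fin.ext
      have h1 := hle i
      have h2 := hdle i
      simp only []
      omega
    · -- function values agree
      intro b hb
      rfl
  calc (∑ a ∈ A, ∑ b ∈ (Finset.univ : Finset (Fin k → Fin (r+1))).filter
          (fun b => ∑ i, ((b i : ℕ)) = r),
        monomial (Finsupp.equivFunOnFinite.symm a) (1:ℂ) *
          monomial (Finsupp.equivFunOnFinite.symm (fun i => ((b i : ℕ)))) 1)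
      = ∑ a ∈ A, ∑ f ∈ C.filter (fun f => ∀ i, a i ≤ (f i : ℕ)),
          monomial (Finsupp.equivFunOnFinite.symm (fun i => ((f i : ℕ)))) (1:ℂ) := by
        apply Finset.sum_congr rfl
        intro a ha
        rw [← step1 a ha]
        apply Finset.sum_congr rfl
        intro b _
        exact M_mul a _
    _ = ∑ f ∈ C, ∑ a ∈ A.filter (fun a => ∀ i, a i ≤ (f i : ℕ)),
          monomial (Finsupp.equivFunOnFinite.symm (fun i => ((f i : ℕ)))) (1:ℂ) := by
        simp only [Finset.sum_filter]
        exact Finset.sum_comm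
    _ = ∑ f ∈ C, theta (fun i => ((f i : ℕ))) μ •
          monomial (Finsupp.equivFunOnFinite.symm (fun i => ((f i : ℕ)))) (1:ℂ) := by
        apply Finset.sum_congr rfl
        intro f _
        rw [Finset.sum_const, theta_eq_card]

lemma rhs_eq {k : ℕ} (μ : Fin k → ℕ) (hμ : Antitone μ) (r : ℕ) :
    (∑ f ∈ (Finset.univ : Finset (Fin k → Fin ((∑ i, μ i) + r + 1))).filter
          (fun f => Antitone (fun i => ((f i : ℕ)))
            ∧ (∀ i, μ i ≤ (f i : ℕ))
            ∧ ∑ i, ((f i : ℕ)) = (∑ i, μ i) + r),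
        theta (fun i => ((f i : ℕ))) μ • msym (fun i => ((f i : ℕ))))
    = ∑ f ∈ (Finset.univ : Finset (Fin k → Fin ((∑ i, μ i) + r + 1))).filter
          (fun f => ∑ i, ((f i : ℕ)) = (∑ i, μ i) + r),
        theta (fun i => ((f i : ℕ))) μ •
          monomial (Finsupp.equivFunOnFinite.symm (fun i => ((f i : ℕ)))) (1:ℂ) := by
  classical
  set s := (∑ i, μ i) + r with hs
  set C : Finset (Fin k → Fin (s+1)) :=
    Finset.univ.filter (fun f => ∑ i, ((f i : ℕ)) = s) with hC
  set P0 : Finset (Fin k → Fin (s+1)) :=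
    Finset.univ.filter (fun f => Antitone (fun i => ((f i : ℕ)))
      ∧ ∑ i, ((f i : ℕ)) = s) with hP0
  -- step 1 : extend the sum from P to P0
  have step1 : (∑ f ∈ (Finset.univ : Finset (Fin k → Fin (s+1))).filter
        (fun f => Antitone (fun i => ((f i : ℕ)))
          ∧ (∀ i, μ i ≤ (f i : ℕ)) ∧ ∑ i, ((f i : ℕ)) = s),
      theta (fun i => ((f i : ℕ))) μ • msym (fun i => ((f i : ℕ))))
      = ∑ l ∈ P0, theta (fun i => ((l i : ℕ))) μ • msym (fun i => ((l i : ℕ))) := by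
    apply Finset.sum_subset
    · intro l hl
      simp only [Finset.mem_filter, Finset.mem_univ, true_and, hP0] at hl ⊢
      exact ⟨hl.1, hl.2.2⟩
    · intro l hl hnl
      simp only [Finset.mem_filter, Finset.mem_univ, true_and, hP0] at hl hnl
      have hnle : ¬ (∀ i, μ i ≤ (l i : ℕ)) := fun h => hnl ⟨hl.1, h, hl.2⟩
      have : theta (fun i => ((l i : ℕ))) μ = 0 := by
        rw [theta_eq_card, Finset.card_eq_zero, Finset.filter_eq_empty_iff]
        intro a ha
        rw [Finset.mem_image] at ha
        obtain ⟨w, _, rfl⟩ := ha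
        intro hc
        exact hnle (antitone_le_of_comp hμ hl.1 w hc)
      rw [this, zero_smul]
  rw [step1]
  -- step 2: fiberwise decomposition via sortA
  rw [← Finset.sum_fiberwise_of_maps_to (g := sortA) (t := P0) ?hmaps
    (fun f => theta (fun i => ((f i : ℕ))) μ •
      monomial (Finsupp.equivFunOnFinite.symm (fun i => ((f i : ℕ)))) (1:ℂ))]
  case hmaps =>
    intro f hf
    simp only [Finset.mem_filter, Finset.mem_univ, true_and, hC, hP0] at hf ⊢
    obtain ⟨w, hw⟩ := sortA_eq_comp_perm f
    constructor
    · intro i j hij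
      exact Fin.le_def.mp (sortA_antitone f hij)
    · rw [hw]
      calc ∑ i, ((f (w i) : ℕ)) = ∑ i, ((f i : ℕ)) := Equiv.sum_comp w (fun i => ((f i : ℕ)))
        _ = s := hf
  -- step 3: each fiber sums to theta • msym
  apply Finset.sum_congr rfl
  intro l hl
  simp only [Finset.mem_filter, Finset.mem_univ, true_and, hP0] at hl
  obtain ⟨hlant, hlsum⟩ := hl
  have hlantF : Antitone l := by
    intro i j hij
    exact Fin.le_def.mpr (hlant hij)
  -- every element of the fiber is a rearrangement with the same theta
  have hfib : ∀ f ∈ C.filter (fun f => sortA f = l),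
      theta (fun i => ((f i : ℕ))) μ = theta (fun i => ((l i : ℕ))) μ := by
    intro f hf
    rw [Finset.mem_filter] at hf
    obtain ⟨w, hw⟩ := sortA_eq_comp_perm f
    have hfl : f = l ∘ w.symm := by
      rw [← hf.2, hw]
      funext i; simp
    rw [← theta_comp_perm (fun i => ((l i : ℕ))) μ w.symm]
    congr 1
    funext i
    rw [hfl]
    rfl
  have hbij : (∑ f ∈ C.filter (fun f => sortA f = l),
        monomial (Finsupp.equivFunOnFinite.symm (fun i => ((f i : ℕ)))) (1:ℂ))
      = msym (fun i => ((l i : ℕ))) := by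
    rw [msym]
    refine Finset.sum_bij (fun f _ => fun i => ((f i : ℕ))) ?_ ?_ ?_ ?_
    · intro f hf
      rw [Finset.mem_filter] at hf
      obtain ⟨w, hw⟩ := sortA_eq_comp_perm f
      have hfl : f = l ∘ w.symm := by
        rw [← hf.2, hw]; funext i; simp
      rw [Finset.mem_image]
      exact ⟨w.symm, Finset.mem_univ _, funext fun i => (congrArg Fin.val (congrFun hfl i)).symm⟩
    · intro f hf g hg hfg
      funext i
      exact Fin.ext (congrFun hfg i)
    · intro a ha
      rw [Finset.mem_image] at ha
      obtain ⟨w, _, rfl⟩ := ha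
      refine ⟨l ∘ w, ?_, rfl⟩
      rw [Finset.mem_filter]
      constructor
      · simp only [Finset.mem_filter, Finset.mem_univ, true_and, hC]
        calc ∑ i, ((l (w i) : ℕ)) = ∑ i, ((l i : ℕ)) := Equiv.sum_comp w (fun i => ((l i : ℕ)))
          _ = s := hlsum
      · exact sortA_unique hlantF w rfl
    · intro f hf
      rfl
  refine Eq.symm ?_
  calc (∑ f ∈ C.filter (fun f => sortA f = l),
        theta (fun i => ((f i : ℕ))) μ •
          monomial (Finsupp.equivFunOnFinite.symm (fun i => ((f i : ℕ)))) (1:ℂ))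
      = ∑ f ∈ C.filter (fun f => sortA f = l),
        theta (fun i => ((l i : ℕ))) μ •
          monomial (Finsupp.equivFunOnFinite.symm (fun i => ((f i : ℕ)))) (1:ℂ) := by
        apply Finset.sum_congr rfl
        intro f hf
        rw [hfib f hf]
    _ = theta (fun i => ((l i : ℕ))) μ • msym (fun i => ((l i : ℕ))) := by
        rw [← Finset.smul_sum, hbij]

/-- in `Λ_k`, `m_μ · h_r = Σ_λ θ_{λ/μ} m_λ`, the sum running over partitions
`λ ⊇ μ` with at most `k` parts and `|λ| = |μ| + r`. -/
theorem stmt13 {k : ℕ} (μ : Fin k → ℕ) (hμ : Antitone μ) (r : ℕ) :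
    msym μ * hsym k r =
      ∑ f ∈ (Finset.univ : Finset (Fin k → Fin ((∑ i, μ i) + r + 1))).filter
          (fun f => Antitone (fun i => ((f i : ℕ)))
            ∧ (∀ i, μ i ≤ (f i : ℕ))
            ∧ ∑ i, ((f i : ℕ)) = (∑ i, μ i) + r),
        theta (fun i => ((f i : ℕ))) μ • msym (fun i => ((f i : ℕ))) := by
  rw [lhs_eq, rhs_eq μ hμ r]
end

section
/- Let ζ be a primitive n-th root of unity and for λ, μ in the alcove A⁺ = {n ≥ λ_1 ≥ ⋯ ≥ λ_k ≥ 1} define the matrix S with entries S_{λμ} = m_λ(ζ^{μ_1},…,ζ^{μ_k})/√(n^k), where m_λ is the monomial symmetric polynomial. Then Σ_{σ ∈ A⁺} m_σ(ζ^{λ}) · |S_σ| · m_σ(ζ^{-μ}) = δ_{λμ} · n^k · |S_λ|, where |S_σ| = ∏_j m_j(σ)! is the stabilizer order. -/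
/-!
The weight `|S_σ| m_σ(y) = Σ_{w ∈ S_k} y^{σ ∘ w}` is constant on the `S_k`-orbit of `σ`, and the
orbits of the points of `A⁺` partition `{1, …, n}^k`. Hence the left side equals
`Σ_{f ∈ {1,…,n}^k} x^f Σ_w y^{f ∘ w}` with `x = ζ^λ`, `y = ζ^{-μ}`; exchanging the sums, it
factors as `Σ_w ∏_i Σ_{t=1}^n (ζ^{λ_{w i} - μ_i})^t`. By orthogonality of the characters of
`ℤ/n` each factor is `n δ_{λ_{w i} μ_i}`, so the sum is `n^k` times the number of `w` with
`λ ∘ w = μ`, which for antitone `λ, μ` is `|S_λ|` if `λ = μ` and `0` otherwise.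
-/

open Finset

/-- Multiplicity `m_j(σ)` of the part `j` among the components of `σ`. -/
def multiplicity' {k : ℕ} (σ : Fin k → ℕ) (j : ℕ) : ℕ :=
  (Finset.univ.filter fun i => σ i = j).card

/-- The order `|S_σ| = ∏_j m_j(σ)!` of the stabilizer of `σ` in `S_k`. -/
noncomputable def stabOrder {k : ℕ} (σ : Fin k → ℕ) : ℕ :=
  ∏ᶠ j : ℕ, (multiplicity' σ j).factorial

/-- The evaluation `m_σ(x) = Σ_{α ∼ σ} ∏_i x_i^{α_i}` of the monomial symmetric polynomial. -/
noncomputable def msEval {k : ℕ} (x : Fin k → ℂ) (σ : Fin k → ℕ) : ℂ :=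
  ∑ a ∈ Finset.image (fun w : Equiv.Perm (Fin k) => σ ∘ w) Finset.univ, ∏ i, x i ^ a i

/-- The alcove `A⁺ = {σ : n ≥ σ_1 ≥ … ≥ σ_k ≥ 1}`, realized as a finset. -/
def alcove (n k : ℕ) : Finset (Fin k → Fin (n + 1)) :=
  Finset.univ.filter fun f => Antitone (fun i => ((f i : ℕ))) ∧ ∀ i, 1 ≤ (f i : ℕ)

section PermOrbit

variable {k : ℕ}

theorem eq_of_antitone_of_comp_perm {α : Type*} [PartialOrder α] {f g : Fin k → α}
    (hf : Antitone f) (hg : Antitone g) {w : Equiv.Perm (Fin k)} (hfg : f ∘ w = g) : f = g := by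
  subst hfg
  exact Tuple.unique_antitone (σ := 1) hf hg

theorem exists_perm_antitone_comp {α : Type*} [LinearOrder α] (f : Fin k → α) :
    ∃ w : Equiv.Perm (Fin k), Antitone (f ∘ w) :=
  ⟨Tuple.sort (OrderDual.toDual ∘ f), Tuple.monotone_sort (OrderDual.toDual ∘ f)⟩

def permOrbit (σ : Fin k → ℕ) : Finset (Fin k → ℕ) :=
  univ.image fun w : Equiv.Perm (Fin k) => σ ∘ w

theorem mem_permOrbit {σ a : Fin k → ℕ} :
    a ∈ permOrbit σ ↔ ∃ w : Equiv.Perm (Fin k), σ ∘ w = a := by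
  simp [permOrbit]

theorem msEval_eq_sum_permOrbit (x : Fin k → ℂ) (σ : Fin k → ℕ) :
    msEval x σ = ∑ a ∈ permOrbit σ, ∏ i, x i ^ a i :=
  rfl

theorem stabOrder_eq_card (σ : Fin k → ℕ) :
    stabOrder σ = #{w : Equiv.Perm (Fin k) | σ ∘ w = σ} := by
  have hsupp : (Function.mulSupport fun j => (multiplicity' σ j).factorial) ⊆ ↑(univ.image σ) := by
    intro j hj
    by_contra hj'
    have : multiplicity' σ j = 0 := by
      simpa [multiplicity', Finset.filter_eq_empty_iff] using hj'
    simp [this] at hj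
  rw [stabOrder, finprod_eq_prod_of_mulSupport_subset _ hsupp, ← Fintype.card_subtype,
    DomMulAct.stabilizer_card' σ]
  simp only [multiplicity', Fintype.card_subtype]

theorem card_comp_perm_eq_stabOrder (σ : Fin k → ℕ) (u : Equiv.Perm (Fin k)) :
    #{w : Equiv.Perm (Fin k) | σ ∘ w = σ ∘ u} = stabOrder σ := by
  rw [stabOrder_eq_card]
  refine Finset.card_equiv (Equiv.mulRight u⁻¹) fun w => ?_
  simp only [mem_filter, mem_univ, true_and, Equiv.coe_mulRight, Equiv.Perm.coe_mul]
  constructor <;> intro h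
  · rw [← Function.comp_assoc, h, Function.comp_assoc]
    simp
  · conv_rhs => rw [← h]
    ext i; simp

theorem sum_perm_comp_eq_stabOrder_nsmul {M : Type*} [AddCommMonoid M] (σ : Fin k → ℕ)
    (F : (Fin k → ℕ) → M) :
    ∑ w : Equiv.Perm (Fin k), F (σ ∘ w) = stabOrder σ • ∑ a ∈ permOrbit σ, F a := by
  rw [Finset.sum_comp, permOrbit, Finset.smul_sum]
  refine Finset.sum_congr rfl fun a ha => ?_
  obtain ⟨u, -, rfl⟩ := Finset.mem_image.mp ha
  rw [card_comp_perm_eq_stabOrder]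

theorem stabOrder_mul_msEval (x : Fin k → ℂ) (σ : Fin k → ℕ) :
    (stabOrder σ : ℂ) * msEval x σ = ∑ w : Equiv.Perm (Fin k), ∏ i, x i ^ σ (w i) := by
  rw [← nsmul_eq_mul]
  exact (sum_perm_comp_eq_stabOrder_nsmul σ fun a => ∏ i, x i ^ a i).symm

theorem card_comp_perm_eq_of_antitone {lam mu : Fin k → ℕ} (hlam : Antitone lam)
    (hmu : Antitone mu) :
    #{w : Equiv.Perm (Fin k) | lam ∘ w = mu} = if lam = mu then stabOrder lam else 0 := by
  split_ifs with h
  · subst h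
    exact (stabOrder_eq_card lam).symm
  · rw [card_eq_zero, filter_eq_empty_iff]
    exact fun w _ hw => h (eq_of_antitone_of_comp_perm hlam hmu hw)

theorem alcove_biUnion_permOrbit (n : ℕ) :
    (alcove n k).biUnion (fun σ => permOrbit fun i => (σ i : ℕ))
      = Fintype.piFinset fun _ : Fin k => Icc 1 n := by
  ext f
  simp only [mem_biUnion, mem_permOrbit, Fintype.mem_piFinset, mem_Icc, alcove, mem_filter,
    mem_univ, true_and]
  constructor
  · rintro ⟨σ, ⟨-, hσ⟩, w, rfl⟩ i
    exact ⟨hσ (w i), Nat.lt_succ_iff.mp (σ (w i)).isLt⟩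
  · intro hf
    obtain ⟨w, hw⟩ := exists_perm_antitone_comp f
    refine ⟨fun i => ⟨f (w i), Nat.lt_succ_iff.mpr (hf (w i)).2⟩, ⟨hw, fun i => (hf (w i)).1⟩,
      w⁻¹, ?_⟩
    ext i
    simp

theorem alcove_pairwiseDisjoint_permOrbit (n : ℕ) :
    (alcove n k : Set (Fin k → Fin (n + 1))).PairwiseDisjoint
      fun σ => permOrbit fun i => (σ i : ℕ) := by
  intro σ hσ τ hτ hne
  simp only [mem_coe, alcove, mem_filter, mem_univ, true_and] at hσ hτ
  refine Finset.disjoint_left.mpr fun a haσ haτ => hne ?_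
  obtain ⟨v, rfl⟩ := mem_permOrbit.mp haσ
  obtain ⟨w, hw⟩ := mem_permOrbit.mp haτ
  have : (fun i => (σ i : ℕ)) = fun i => (τ i : ℕ) :=
    eq_of_antitone_of_comp_perm hσ.1 hτ.1 (w := v * w⁻¹) <| by
      ext i
      simpa using (congrFun hw (w⁻¹ i)).symm
  ext i
  exact congrFun this i

theorem sum_alcove_sum_permOrbit {M : Type*} [AddCommMonoid M] (n : ℕ) (G : (Fin k → ℕ) → M) :
    ∑ σ ∈ alcove n k, ∑ a ∈ permOrbit (fun i => (σ i : ℕ)), G a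
      = ∑ f ∈ Fintype.piFinset (fun _ : Fin k => Icc 1 n), G f := by
  rw [← alcove_biUnion_permOrbit, sum_biUnion (alcove_pairwiseDisjoint_permOrbit n)]

theorem sum_piFinset_prod_pow_mul_sum_perm {R : Type*} [CommSemiring R] (s : Finset ℕ)
    (x y : Fin k → R) :
    ∑ f ∈ Fintype.piFinset (fun _ : Fin k => s),
        (∏ i, x i ^ f i) * ∑ w : Equiv.Perm (Fin k), ∏ i, y i ^ f (w i)
      = ∑ w : Equiv.Perm (Fin k), ∏ i, ∑ t ∈ s, (x (w i) * y i) ^ t := by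
  simp only [mul_sum]
  rw [sum_comm]
  refine sum_congr rfl fun w _ => ?_
  calc ∑ f ∈ Fintype.piFinset (fun _ => s), (∏ i, x i ^ f i) * ∏ i, y i ^ f (w i)
      = ∑ f ∈ Fintype.piFinset (fun _ => s), ∏ i, (x i * y (w.symm i)) ^ f i := by
        refine sum_congr rfl fun f _ => ?_
        rw [← Equiv.prod_comp w.symm fun i => y i ^ f (w i), ← prod_mul_distrib]
        simp [mul_pow]
    _ = ∏ i, ∑ t ∈ s, (x i * y (w.symm i)) ^ t := (prod_univ_sum _ _).symm
    _ = ∏ i, ∑ t ∈ s, (x (w i) * y i) ^ t := by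
        rw [← Equiv.prod_comp w]
        simp

end PermOrbit

theorem sum_Icc_pow_of_pow_eq_one {K : Type*} [Field K] [DecidableEq K] {c : K} {n : ℕ}
    (hc : c ^ n = 1) :
    ∑ t ∈ Icc 1 n, c ^ t = if c = 1 then (n : K) else 0 := by
  split_ifs with h
  · simp [h]
  · rw [← Finset.Ico_add_one_right_eq_Icc, geom_sum_Ico h (by omega), pow_succ, hc]
    simp

theorem IsPrimitiveRoot.pow_inj_of_mem_Icc {R : Type*} [CommRing R] [IsDomain R] {ζ : R}
    {n : ℕ} (hζ : IsPrimitiveRoot ζ n) {a b : ℕ} (ha : a ∈ Icc 1 n) (hb : b ∈ Icc 1 n)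
    (H : ζ ^ a = ζ ^ b) : a = b := by
  rw [mem_Icc] at ha hb
  obtain ⟨a, rfl⟩ := Nat.exists_eq_add_of_le' ha.1
  obtain ⟨b, rfl⟩ := Nat.exists_eq_add_of_le' hb.1
  rw [pow_succ, pow_succ] at H
  have := hζ.pow_inj (by omega) (by omega) (mul_right_cancel₀ (hζ.ne_zero (by omega)) H)
  omega

theorem IsPrimitiveRoot.sum_Icc_pow_mul_inv_pow {K : Type*} [Field K] [DecidableEq K] {ζ : K}
    {n : ℕ} (hζ : IsPrimitiveRoot ζ n) {a b : ℕ} (ha : a ∈ Icc 1 n) (hb : b ∈ Icc 1 n) :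
    ∑ t ∈ Icc 1 n, (ζ ^ a * (ζ ^ b)⁻¹) ^ t = if a = b then (n : K) else 0 := by
  have hn : n ≠ 0 := by rw [mem_Icc] at ha; omega
  have hc : (ζ ^ a * (ζ ^ b)⁻¹) ^ n = 1 := by
    rw [mul_pow, inv_pow, ← pow_mul, ← pow_mul, mul_comm a, mul_comm b, pow_mul, pow_mul,
      hζ.pow_eq_one, one_pow, one_pow, inv_one, mul_one]
  rw [sum_Icc_pow_of_pow_eq_one hc]
  refine if_congr ?_ rfl rfl
  rw [mul_inv_eq_one₀ (pow_ne_zero b (hζ.ne_zero hn))]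
  exact ⟨hζ.pow_inj_of_mem_Icc ha hb, fun h => h ▸ rfl⟩

theorem stmt15_general {n k : ℕ} (ζ : ℂ) (hζ : IsPrimitiveRoot ζ n)
    (lam mu : Fin k → ℕ)
    (hlam : Antitone lam ∧ ∀ i, 1 ≤ lam i ∧ lam i ≤ n)
    (hmu : Antitone mu ∧ ∀ i, 1 ≤ mu i ∧ mu i ≤ n) :
    ∑ σ ∈ alcove n k,
        msEval (fun i => ζ ^ lam i) (fun i => ((σ i : ℕ)))
          * (stabOrder fun i => ((σ i : ℕ)))
          * msEval (fun i => (ζ ^ mu i)⁻¹) (fun i => ((σ i : ℕ)))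
      = if lam = mu then (n : ℂ) ^ k * (stabOrder lam : ℂ) else 0 := by
  set x : Fin k → ℂ := fun i => ζ ^ lam i
  set y : Fin k → ℂ := fun i => (ζ ^ mu i)⁻¹
  have hchar (w : Equiv.Perm (Fin k)) :
      ∏ i, ∑ t ∈ Icc 1 n, (x (w i) * y i) ^ t = if lam ∘ w = mu then (n : ℂ) ^ k else 0 := by
    simp only [x, y, hζ.sum_Icc_pow_mul_inv_pow (mem_Icc.2 (hlam.2 _)) (mem_Icc.2 (hmu.2 _)),
      Fintype.prod_ite_zero, prod_const, card_univ, Fintype.card_fin, funext_iff,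
      Function.comp_apply]
  calc _ = ∑ σ ∈ alcove n k, ∑ a ∈ permOrbit (fun i => (σ i : ℕ)),
          (∏ i, x i ^ a i) * ∑ w : Equiv.Perm (Fin k), ∏ i, y i ^ a (w i) := by
        refine sum_congr rfl fun σ _ => ?_
        rw [mul_assoc, stabOrder_mul_msEval, msEval_eq_sum_permOrbit, sum_mul]
        refine sum_congr rfl fun a ha => ?_
        obtain ⟨u, rfl⟩ := mem_permOrbit.mp ha
        exact congrArg _ (Equiv.sum_comp (Equiv.mulLeft u) fun w => ∏ i, y i ^ (σ (w i) : ℕ)).symm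
    _ = ∑ w : Equiv.Perm (Fin k), ∏ i, ∑ t ∈ Icc 1 n, (x (w i) * y i) ^ t := by
        rw [sum_alcove_sum_permOrbit, sum_piFinset_prod_pow_mul_sum_perm]
    _ = #{w : Equiv.Perm (Fin k) | lam ∘ w = mu} * (n : ℂ) ^ k := by
        simp only [hchar, sum_ite, sum_const_zero, add_zero, sum_const, nsmul_eq_mul]
    _ = _ := by
        rw [card_comp_perm_eq_of_antitone hlam.1 hmu.1]
        split_ifs <;> simp [mul_comm]

/-- `Σ_{σ ∈ A⁺} m_σ(ζ^λ) |S_σ| m_σ(ζ^{−μ}) = δ_{λμ} n^k |S_λ|`. -/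
theorem stmt15 {n k : ℕ} (hn : 0 < n) (ζ : ℂ) (hζ : IsPrimitiveRoot ζ n)
    (lam mu : Fin k → ℕ)
    (hlam : Antitone lam ∧ ∀ i, 1 ≤ lam i ∧ lam i ≤ n)
    (hmu : Antitone mu ∧ ∀ i, 1 ≤ mu i ∧ mu i ≤ n) :
    ∑ σ ∈ alcove n k,
        msEval (fun i => ζ ^ lam i) (fun i => ((σ i : ℕ)))
          * (stabOrder fun i => ((σ i : ℕ)))
          * msEval (fun i => (ζ ^ mu i)⁻¹) (fun i => ((σ i : ℕ)))
      = if lam = mu then (n : ℂ) ^ k * (stabOrder lam : ℂ) else 0 :=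
  stmt15_general ζ hζ lam mu hlam hmu
end
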